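/- arXiv:2008.02621 — 3 statements merged into one kernel-verified Lean document; each statement's English description precedes it below -/
import Mathlib

section
/- Let G be a locally compact topological group acting by continuous linear maps on a barrelled locally convex K-vector space V. Then the action map G × V → V is continuous if and only if it is separately continuous. -/
open Filter Topology Pointwise

/-- An `𝒪_K`-lattice in a `K`-vector space. -/
def IsLatticeSet (K : Type*) [NormedField K] {V : Type*} [AddCommGroup V] [Module K V]
    (L : Set V) : Prop :=
  (0 : V) ∈ L ∧ (∀ x ∈ L, ∀ y ∈ L, x + y ∈ L) ∧
    (∀ c : K, ‖c‖ ≤ 1 → ∀ x ∈ L, c • x ∈ L) ∧ ∀ v : V, ∃ c : K, v ∈ c • L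

/-!
Joint continuity at `(g₀, v₀)` follows from `ρ g v = ρ g (v - v₀) + ρ g v₀`
once the operators `ρ g`, for `g` in a compact neighbourhood `C` of `g₀`, are equicontinuous
at `0`. Each orbit `ρ C v` is compact, hence bounded, so this is Banach–Steinhaus: for a closed
lattice `M ⊆ U`, the set `⋂ g ∈ C, (ρ g)⁻¹ M` is a closed lattice, hence open since `V` is
barrelled.
-/

section Lattice

variable {K V W : Type*} [NontriviallyNormedField K] [AddCommGroup V] [Module K V]
  [AddCommGroup W] [Module K W]

theorem IsLatticeSet.closure [TopologicalSpace V] [IsTopologicalAddGroup V]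
    [ContinuousSMul K V] {L : Set V} (hL : IsLatticeSet K L) :
    IsLatticeSet K (_root_.closure L) := by
  obtain ⟨h0, hadd, hsmul, habs⟩ := hL
  refine ⟨subset_closure h0, fun x hx y hy => map_mem_closure₂ continuous_add hx hy hadd,
    fun c hc x hx => map_mem_closure (continuous_const_smul c) hx (hsmul c hc),
    fun v => (habs v).imp fun c hc => Set.smul_set_mono subset_closure hc⟩

theorem IsLatticeSet.iInter_preimage {ι : Type*} {M : Set W} (hM : IsLatticeSet K M)
    (f : ι → V →ₗ[K] W) (habs : ∀ v, Absorbs K M (Set.range fun i => f i v)) :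
    IsLatticeSet K (⋂ i, f i ⁻¹' M) := by
  obtain ⟨h0, hadd, hsmul, -⟩ := hM
  refine ⟨Set.mem_iInter.mpr fun i => by simpa using h0, fun x hx y hy => ?_, fun c hc x hx => ?_, fun v => ?_⟩
  · simp only [Set.mem_iInter, Set.mem_preimage, map_add] at hx hy ⊢
    exact fun i => hadd _ (hx i) _ (hy i)
  · simp only [Set.mem_iInter, Set.mem_preimage, map_smul] at hx ⊢
    exact fun i => hsmul c hc _ (hx i)
  · obtain ⟨c, hsub, hc⟩ := ((habs v).and (Bornology.eventually_ne_cobounded 0)).exists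
    refine ⟨c, (Set.mem_smul_set_iff_inv_smul_mem₀ hc _ _).mpr ?_⟩
    simp only [Set.mem_iInter, Set.mem_preimage, map_smul]
    exact fun i => (Set.mem_smul_set_iff_inv_smul_mem₀ hc _ _).mp (hsub ⟨i, rfl⟩)

theorem banach_steinhaus_of_barrelled [TopologicalSpace V] [TopologicalSpace W]
    [IsTopologicalAddGroup W] [ContinuousSMul K W]
    (hlc : ∀ U ∈ 𝓝 (0 : W), ∃ L, IsLatticeSet K L ∧ L ∈ 𝓝 (0 : W) ∧ L ⊆ U)
    (hbarrelled : ∀ L : Set V, IsLatticeSet K L → IsClosed L → IsOpen L)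
    {ι : Type*} (f : ι → V →ₗ[K] W) (hf : ∀ i, Continuous (f i))
    (hbdd : ∀ v, Bornology.IsVonNBounded K (Set.range fun i => f i v))
    {U : Set W} (hU : U ∈ 𝓝 0) : ∃ B ∈ 𝓝 (0 : V), ∀ i, Set.MapsTo (f i) B U := by
  obtain ⟨U', hU', hU'closed, hU'U⟩ := exists_mem_nhds_isClosed_subset hU
  obtain ⟨L, hL, hL0, hLU'⟩ := hlc U' hU'
  have hM0 : _root_.closure L ∈ 𝓝 (0 : W) := mem_of_superset hL0 subset_closure
  have hB : IsLatticeSet K (⋂ i, f i ⁻¹' _root_.closure L) :=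
    hL.closure.iInter_preimage f fun v => hbdd v hM0
  have hBclosed : IsClosed (⋂ i, f i ⁻¹' _root_.closure L) :=
    isClosed_iInter fun i => isClosed_closure.preimage (hf i)
  refine ⟨_, (hbarrelled _ hB hBclosed).mem_nhds hB.1, fun i v hv => ?_⟩
  exact hU'U (closure_minimal hLU' hU'closed (Set.mem_iInter.mp hv i))

end Lattice

theorem continuous_uncurry_of_forall_mapsTo {X F V W : Type*} [TopologicalSpace X]
    [AddGroup V] [TopologicalSpace V] [ContinuousSub V]
    [AddGroup W] [TopologicalSpace W] [ContinuousAdd W]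
    [FunLike F V W] [AddMonoidHomClass F V W] (f : X → F)
    (horbit : ∀ v, Continuous fun x => f x v)
    (hequi : ∀ x₀, ∀ U ∈ 𝓝 (0 : W), ∃ N ∈ 𝓝 x₀, ∃ B ∈ 𝓝 (0 : V), ∀ x ∈ N, Set.MapsTo (f x) B U) :
    Continuous fun p : X × V => f p.1 p.2 := by
  refine continuous_iff_continuousAt.mpr fun ⟨x₀, v₀⟩ => ?_
  have hdiff : Tendsto (fun p : X × V => f p.1 (p.2 - v₀)) (𝓝 (x₀, v₀)) (𝓝 0) := by
    refine tendsto_def.mpr fun U hU => ?_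
    obtain ⟨N, hN, B, hB, hNB⟩ := hequi x₀ U hU
    have hBv₀ : (fun v => v - v₀) ⁻¹' B ∈ 𝓝 v₀ :=
      (continuous_id.sub continuous_const).continuousAt.preimage_mem_nhds (by simpa using hB)
    filter_upwards [prod_mem_nhds hN hBv₀] with p hp using hNB p.1 hp.1 hp.2
  have hsum := hdiff.add ((horbit v₀).continuousAt.comp continuousAt_fst)
  simp only [Function.comp_def, ← map_add, sub_add_cancel, zero_add] at hsum
  exact hsum

theorem stmt2_general {K V G : Type*} [NontriviallyNormedField K]
    [AddCommGroup V] [Module K V] [TopologicalSpace V] [IsTopologicalAddGroup V]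
    [ContinuousSMul K V]
    [Group G] [TopologicalSpace G] [LocallyCompactSpace G]
    (hlc : ∀ U ∈ 𝓝 (0 : V), ∃ L, IsLatticeSet K L ∧ L ∈ 𝓝 (0 : V) ∧ L ⊆ U)
    (hbarrelled : ∀ L : Set V, IsLatticeSet K L → IsClosed L → IsOpen L)
    (ρ : G →* (V →ₗ[K] V)) (hcts : ∀ g : G, Continuous (ρ g)) :
    Continuous (fun p : G × V => ρ p.1 p.2) ↔
      ((∀ g : G, Continuous fun v : V => ρ g v) ∧ ∀ v : V, Continuous fun g : G => ρ g v) := by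
  refine ⟨fun h => ⟨fun g => h.comp (Continuous.prodMk_right g),
    fun v => h.comp (Continuous.prodMk_left v)⟩, fun ⟨_, horbit⟩ => ?_⟩
  refine continuous_uncurry_of_forall_mapsTo (fun g => ρ g) horbit fun g₀ U hU => ?_
  obtain ⟨C, hC, hCg₀⟩ := exists_compact_mem_nhds g₀
  have hbdd (v : V) : Bornology.IsVonNBounded K (Set.range fun g : C => ρ g v) := by
    simpa only [Set.image_eq_range] using (hC.image (horbit v)).isVonNBounded (𝕜 := K)
  obtain ⟨B, hB, hCB⟩ :=
    banach_steinhaus_of_barrelled hlc hbarrelled (fun g : C => ρ g) (fun g => hcts g) hbdd hU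
  exact ⟨C, hCg₀, B, hB, fun g hg => hCB ⟨g, hg⟩⟩

/-- A locally compact topological group acting by continuous linear maps on a barrelled
locally convex `K`-vector space: the action `G × V → V` is continuous iff it is separately
continuous. -/
theorem stmt2 {K V G : Type*} [NontriviallyNormedField K] [CompleteSpace K] [IsUltrametricDist K]
    [AddCommGroup V] [Module K V] [TopologicalSpace V] [IsTopologicalAddGroup V]
    [ContinuousSMul K V]
    [Group G] [TopologicalSpace G] [IsTopologicalGroup G] [LocallyCompactSpace G]
    (hlc : ∀ U ∈ 𝓝 (0 : V), ∃ L, IsLatticeSet K L ∧ L ∈ 𝓝 (0 : V) ∧ L ⊆ U)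
    (hbarrelled : ∀ L : Set V, IsLatticeSet K L → IsClosed L → IsOpen L)
    (ρ : G →* (V →ₗ[K] V)) (hcts : ∀ g : G, Continuous (ρ g)) :
    Continuous (fun p : G × V => ρ p.1 p.2) ↔
      ((∀ g : G, Continuous fun v : V => ρ g v) ∧ ∀ v : V, Continuous fun g : G => ρ g v) :=
  stmt2_general hlc hbarrelled ρ hcts
end

section
/- Let 0 → A → B → C → 0 be a short exact sequence of locally convex K-vector spaces with strict maps (i.e., the maps induce isomorphisms onto their images with quotient/subspace topologies). If every continuous linear functional on a subspace of B extends to B (e.g., K spherically complete, or B of countable type), then the dual sequence 0 → C' → B' → A' → 0 of continuous dual spaces is exact as a sequence of abelian groups. -/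
/-!
A strict injection is a topological embedding and a strict surjection is a quotient map.
A functional on `B` vanishing on `ι(A) = ker π`
factors linearly through `π`, and the factor is continuous because `π` is a quotient map. A
functional on `A` becomes, through the embedding `ι`, a continuous functional on the subspace
`ι(A)`, and the Hahn–Banach property extends it to `B`.
-/

open Filter Topology Pointwise

/-- A map of topological spaces (in practice a continuous linear map of LCVS) is strict if it is
continuous and induces a topological isomorphism `V/ker f ≅ im f`; equivalently, images of open
sets are open in the subspace topology of the range. -/
def IsStrictMap {V W : Type*} [TopologicalSpace V] [TopologicalSpace W] (f : V → W) : Prop :=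
  Continuous f ∧ ∀ U : Set V, IsOpen U → ∃ O : Set W, IsOpen O ∧ f '' U = O ∩ Set.range f

section StrictMap

variable {V W : Type*} [TopologicalSpace V] [TopologicalSpace W] {f : V → W}

lemma IsStrictMap.isOpenQuotientMap_rangeFactorization (hf : _root_.IsStrictMap f) :
    IsOpenQuotientMap (Set.rangeFactorization f) := by
  refine ⟨Set.rangeFactorization_surjective, hf.1.rangeFactorization, fun U hU => ?_⟩
  obtain ⟨O, hO, hfU⟩ := hf.2 U hU
  refine ⟨O, hO, ?_⟩
  ext ⟨w, hw⟩
  simp only [Set.mem_preimage, Set.mem_image, Subtype.ext_iff, Set.rangeFactorization_coe]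
  rw [← Set.mem_image, hfU]
  simp [hw]

lemma IsStrictMap.isEmbedding (hf : _root_.IsStrictMap f) (hinj : Function.Injective f) :
    IsEmbedding f :=
  isEmbedding_iff_isStrictMap_injective.mpr
    ⟨hf.isOpenQuotientMap_rangeFactorization.isQuotientMap, hinj⟩

lemma IsStrictMap.isQuotientMap (hf : _root_.IsStrictMap f)
    (hsurj : Function.Surjective f) : IsQuotientMap f :=
  isQuotientMap_iff_isStrictMap_surjective.mpr
    ⟨hf.isOpenQuotientMap_rangeFactorization.isQuotientMap, hsurj⟩

end StrictMap

theorem LinearMap.exists_comp_eq_of_surjective {R M N P : Type*} [Ring R] [AddCommGroup M]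
    [AddCommGroup N] [AddCommGroup P] [Module R M] [Module R N] [Module R P] {π : M →ₗ[R] N}
    (hπ : Function.Surjective π) {g : M →ₗ[R] P} (hker : LinearMap.ker π ≤ LinearMap.ker g) :
    ∃ f : N →ₗ[R] P, f ∘ₗ π = g :=
  ⟨(LinearMap.ker π).liftQ g hker ∘ₗ (π.quotKerEquivOfSurjective hπ).symm.toLinearMap,
    LinearMap.ext fun x => by simp⟩

namespace ContinuousLinearMap

theorem cancel_right {R M N P : Type*} [Semiring R] [AddCommMonoid M] [AddCommMonoid N]
    [AddCommMonoid P] [Module R M] [Module R N] [Module R P] [TopologicalSpace M]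
    [TopologicalSpace N] [TopologicalSpace P] {g : M →L[R] N} {f f' : N →L[R] P}
    (hg : Function.Surjective g) : f.comp g = f'.comp g ↔ f = f' :=
  ⟨fun h => coe_injective ((LinearMap.cancel_right hg).mp (congrArg toLinearMap h)),
    fun h => h ▸ rfl⟩

variable {R M N P : Type*} [Ring R] [AddCommGroup M] [AddCommGroup N] [AddCommGroup P]
  [Module R M] [Module R N] [Module R P] [TopologicalSpace M] [TopologicalSpace N]
  [TopologicalSpace P]

theorem exists_comp_eq_of_isQuotientMap {π : M →L[R] N} (hπ : IsQuotientMap π) {g : M →L[R] P}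
    (hker : LinearMap.ker (π : M →ₗ[R] N) ≤ LinearMap.ker (g : M →ₗ[R] P)) :
    ∃ f : N →L[R] P, f.comp π = g := by
  obtain ⟨f, hf⟩ := LinearMap.exists_comp_eq_of_surjective hπ.surjective hker
  have hcont : Continuous f := hπ.continuous_iff.mpr (by
    convert g.continuous
    exact congrArg DFunLike.coe hf)
  exact ⟨⟨f, hcont⟩, coe_injective hf⟩

theorem exists_comp_eq_of_isEmbedding {ι : M →L[R] N} (hι : IsEmbedding ι)
    (hext : ∀ (p : Submodule R N) (f : p →L[R] P), ∃ g : N →L[R] P, ∀ x : p, g x = f x)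
    (h : M →L[R] P) : ∃ g : N →L[R] P, g.comp ι = h := by
  let e := LinearEquiv.ofInjective (ι : M →ₗ[R] N) hι.injective
  have he : ∀ x, ι (e.symm x) = x := LinearEquiv.ofInjective_symm_apply (ι : M →ₗ[R] N)
  have he_cont : Continuous e.symm := hι.continuous_iff.mpr (by
    convert continuous_subtype_val
    exact funext he)
  obtain ⟨g, hg⟩ := hext _ ⟨(h : M →ₗ[R] P) ∘ₗ e.symm.toLinearMap, h.continuous.comp he_cont⟩
  refine ⟨g, ext fun a => ?_⟩
  simpa [e, LinearEquiv.ofInjective_apply] using hg (e a)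

end ContinuousLinearMap

theorem stmt5_general {K A B C : Type*} [NontriviallyNormedField K]
    [AddCommGroup A] [Module K A] [TopologicalSpace A]
    [AddCommGroup B] [Module K B] [TopologicalSpace B]
    [AddCommGroup C] [Module K C] [TopologicalSpace C]
    (ι : A →L[K] B) (π : B →L[K] C)
    (hinj : Function.Injective ι) (hsurj : Function.Surjective π)
    (hexact : ∀ b : B, π b = 0 ↔ ∃ a : A, ι a = b)
    (hιs : _root_.IsStrictMap ι) (hπs : _root_.IsStrictMap π)
    (hHB : ∀ (p : Submodule K B) (f : p →L[K] K), ∃ g : B →L[K] K, ∀ x : p, g x = f x) :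
    Function.Injective (fun f : C →L[K] K => f.comp π) ∧
      (∀ g : B →L[K] K, (∀ a : A, g (ι a) = 0) ↔ ∃ f : C →L[K] K, f.comp π = g) ∧
      Function.Surjective (fun g : B →L[K] K => g.comp ι) := by
  refine ⟨fun f f' h => (ContinuousLinearMap.cancel_right hsurj).mp h, fun g => ⟨?_, ?_⟩,
    ContinuousLinearMap.exists_comp_eq_of_isEmbedding (hιs.isEmbedding hinj) hHB⟩
  · intro hg
    refine ContinuousLinearMap.exists_comp_eq_of_isQuotientMap (hπs.isQuotientMap hsurj) ?_
    intro b hb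
    obtain ⟨a, rfl⟩ := (hexact b).mp hb
    exact hg a
  · rintro ⟨f, rfl⟩ a
    simp [(hexact (ι a)).mpr ⟨a, rfl⟩]

/-- If `0 → A → B → C → 0` is a strict exact sequence of locally convex `K`-vector spaces and
Hahn-Banach holds for `B` (every continuous functional on a subspace of `B` extends), then the
dual sequence `0 → C' → B' → A' → 0` is exact as a sequence of abelian groups. -/
theorem stmt5 {K A B C : Type*} [NontriviallyNormedField K] [CompleteSpace K]
    [IsUltrametricDist K]
    [AddCommGroup A] [Module K A] [TopologicalSpace A] [IsTopologicalAddGroup A]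
    [ContinuousSMul K A]
    [AddCommGroup B] [Module K B] [TopologicalSpace B] [IsTopologicalAddGroup B]
    [ContinuousSMul K B]
    [AddCommGroup C] [Module K C] [TopologicalSpace C] [IsTopologicalAddGroup C]
    [ContinuousSMul K C]
    (ι : A →L[K] B) (π : B →L[K] C)
    (hinj : Function.Injective ι) (hsurj : Function.Surjective π)
    (hexact : ∀ b : B, π b = 0 ↔ ∃ a : A, ι a = b)
    (hιs : _root_.IsStrictMap ι) (hπs : _root_.IsStrictMap π)
    (hHB : ∀ (p : Submodule K B) (f : p →L[K] K), ∃ g : B →L[K] K, ∀ x : p, g x = f x) :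
    Function.Injective (fun f : C →L[K] K => f.comp π) ∧
      (∀ g : B →L[K] K, (∀ a : A, g (ι a) = 0) ↔ ∃ f : C →L[K] K, f.comp π = g) ∧
      Function.Surjective (fun g : B →L[K] K => g.comp ι) :=
  stmt5_general ι π hinj hsurj hexact hιs hπs hHB
end

section
/- Let M be a d-dimensional K-vector space with basis e_1,…,e_d, and define the Hodge-type star operator ⋆ : ∧^k M → ∧^{d−k} M by ⋆ e_φ = sgn(φ*) e_{φ*}, where e_φ = e_{φ(1)} ∧ … ∧ e_{φ(k)} for injective order morphisms φ : [k] → [d]. Then for every invertible endomorphism A of M, acting on exterior powers functorially: det(A) · ((A^{-1})^t ∘ ⋆) = ⋆ ∘ ∧^k A, where (A^{-1})^t is the transpose with respect to the given basis acting on ∧^{d−k} M. -/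
/-!
The identity is Jacobi's theorem on complementary minors: if `A * A' = 1` and `#I = #J`, then
`det A · det A'[I, J] = (-1)^(ΣI + ΣJ) · det A[Jᶜ, Iᶜ]`. Reordering rows and columns of `A` so
that the rows in `J` and the columns in `I` come first gives a block matrix `N` with
`N * N' = 1`, and `N * [[N'₁₁, 0], [N'₂₁, 1]] = [[1, N₁₂], [0, N₂₂]]` yields
`det N · det N'₁₁ = det N₂₂`. The reorderings are shuffles, and the shuffle putting `S` first
has `∑ y ∈ S, #{x ∉ S | x < y} = ΣS - (0 + 1 + ⋯ + (#S - 1))` inversions. Applied to `A` and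
`A' = A⁻¹` (transposed), Jacobi's identity is the star identity coordinate by coordinate, once
the sum over `k`-subsets is reindexed by complements.
-/

/-- Model of `∧^k M` for a `d`-dimensional space `M` with chosen basis: coordinates indexed by
`k`-element subsets of `Fin d` (i.e. by injective order morphisms `[k] → [d]`). The functorial
action of an endomorphism with matrix `A` is given by its `k × k` minors:
`(∧^k A) e_ψ = Σ_φ det A_{φ,ψ} e_φ`. -/
noncomputable def extPowMap {K : Type*} [Field K] {d : ℕ} (k : ℕ)
    (A : Matrix (Fin d) (Fin d) K) :
    ({s : Finset (Fin d) // s.card = k} → K) → ({s : Finset (Fin d) // s.card = k} → K) :=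
  fun c t => ∑ u : {s : Finset (Fin d) // s.card = k},
    (A.submatrix (fun i => (t.1.orderIsoOfFin t.2 i).1)
      (fun i => (u.1.orderIsoOfFin u.2 i).1)).det * c u

/-- The Hodge-type star operator `⋆ : ∧^k M → ∧^{d−k} M`, `⋆ e_φ = sgn(φ*) e_{φ*}` with
`sgn(φ*) = (−1)^{Σ_i φ*(i)}` (1-based indexing, whence the `+ 1`), in coordinates. -/
noncomputable def starMap {K : Type*} [Field K] {d k : ℕ} (hkd : k ≤ d) :
    ({s : Finset (Fin d) // s.card = k} → K) → ({s : Finset (Fin d) // s.card = d - k} → K) :=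
  fun c u => ((-1 : K) ^ (∑ i ∈ u.1, ((i : ℕ) + 1))) *
    c ⟨u.1ᶜ, by rw [Finset.card_compl, u.2, Fintype.card_fin]; omega⟩

open Finset Equiv Matrix

theorem Finset.sum_card_filter_lt {α : Type*} [LinearOrder α] (s : Finset α) :
    ∑ y ∈ s, #{x ∈ s | x < y} = ∑ j ∈ range #s, j := by
  induction s using Finset.induction_on_max with
  | empty => simp
  | insert a s ha ih =>
    have ha' : a ∉ s := fun h => lt_irrefl a (ha a h)
    rw [sum_insert ha', card_insert_of_notMem ha', sum_range_succ, ← ih, add_comm]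
    congr 1
    · refine sum_congr rfl fun y hy => ?_
      rw [filter_insert, if_neg (ha y hy).not_gt]
    · rw [filter_insert, if_neg (lt_irrefl a), filter_true_of_mem ha]

theorem Fin.sum_val_eq_sum_card_compl_lt_add {d : ℕ} (S : Finset (Fin d)) :
    ∑ y ∈ S, (y : ℕ) = ∑ y ∈ S, #{x ∈ Sᶜ | x < y} + ∑ j ∈ range #S, j := by
  rw [← S.sum_card_filter_lt, ← sum_add_distrib]
  refine sum_congr rfl fun y _ => ?_
  rw [← Fin.card_Iio y, ← card_filter_add_card_filter_not (· ∈ S), add_comm]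
  congr 2 <;> ext x <;> simp [and_comm]

theorem Fin.sum_val_add_one {d : ℕ} (s : Finset (Fin d)) :
    ∑ i ∈ s, ((i : ℕ) + 1) = ∑ i ∈ s, (i : ℕ) + #s := by
  rw [sum_add_distrib, Finset.sum_const, smul_eq_mul, mul_one]

theorem Fin.card_compl_eq_iff {d k : ℕ} (hkd : k ≤ d) (s : Finset (Fin d)) :
    #sᶜ = k ↔ #s = d - k := by
  have := card_le_univ s
  simp only [card_compl, Fintype.card_fin] at this ⊢
  omega

def Fin.complCardEquiv {d k : ℕ} (hkd : k ≤ d) :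
    {s : Finset (Fin d) // #s = d - k} ≃ {s : Finset (Fin d) // #s = k} where
  toFun u := ⟨u.1ᶜ, (card_compl_eq_iff hkd u).mpr u.2⟩
  invFun s := ⟨s.1ᶜ, (card_compl_eq_iff hkd _).mp (by rw [compl_compl, s.2])⟩
  left_inv u := Subtype.ext (compl_compl _)
  right_inv s := Subtype.ext (compl_compl _)

section Shuffle

variable {d m k : ℕ} {S : Finset (Fin d)}

noncomputable def Fin.shufflePerm (hS : #S = m) (hSc : #Sᶜ = k) (hd : m + k = d) :
    Perm (Fin d) :=
  (finSumFinEquiv.trans (finCongr hd)).symm.trans (finSumEquivOfFinset hS hSc)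

theorem Fin.shufflePerm_apply (hS : #S = m) (hSc : #Sᶜ = k) (hd : m + k = d)
    (a : Fin m ⊕ Fin k) :
    shufflePerm hS hSc hd (finCongr hd (finSumFinEquiv a)) = finSumEquivOfFinset hS hSc a := by
  simp [shufflePerm]

def Fin.shuffleKey (S : Finset (Fin d)) (x : Fin d) : ℕ := if x ∈ S then x else d + x

theorem Fin.strictMono_shuffleKey_comp_shufflePerm (hS : #S = m) (hSc : #Sᶜ = k)
    (hd : m + k = d) : StrictMono (shuffleKey S ∘ shufflePerm hS hSc hd) := by
  have hcompl (j : Fin k) : Sᶜ.orderEmbOfFin hSc j ∉ S :=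
    mem_compl.mp (orderEmbOfFin_mem _ _ j)
  intro i j hij
  obtain ⟨a, rfl⟩ := (finSumFinEquiv.trans (finCongr hd)).surjective i
  obtain ⟨b, rfl⟩ := (finSumFinEquiv.trans (finCongr hd)).surjective j
  simp only [Function.comp_apply, Equiv.trans_apply, shufflePerm_apply, shuffleKey] at hij ⊢
  rcases a with a | a <;> rcases b with b | b <;>
    simp only [finSumFinEquiv_apply_left, finSumFinEquiv_apply_right, finCongr_apply,
      Fin.lt_def, Fin.val_cast, Fin.val_castAdd, Fin.val_natAdd] at hij <;>
    simp only [finSumEquivOfFinset_inl, finSumEquivOfFinset_inr, orderEmbOfFin_mem, hcompl,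
      if_true, if_false]
  · exact (S.orderEmbOfFin hS).strictMono hij
  · have := (S.orderEmbOfFin hS a).isLt
    omega
  · omega
  · have := (Sᶜ.orderEmbOfFin hSc).strictMono (show a < b by rw [Fin.lt_def]; omega)
    rw [Fin.lt_def] at this
    omega

theorem Fin.shufflePerm_symm_lt_iff (hS : #S = m) (hSc : #Sᶜ = k) (hd : m + k = d)
    {x y : Fin d} (hxy : x < y) :
    (shufflePerm hS hSc hd).symm x < (shufflePerm hS hSc hd).symm y ↔ (y ∈ S → x ∈ S) := by
  rw [← (strictMono_shuffleKey_comp_shufflePerm hS hSc hd).lt_iff_lt]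
  simp only [Function.comp_apply, Equiv.apply_symm_apply, shuffleKey]
  rw [Fin.lt_def] at hxy
  have := y.isLt
  split_ifs <;> simp_all <;> omega

theorem Fin.sign_shufflePerm (hS : #S = m) (hSc : #Sᶜ = k) (hd : m + k = d) :
    Perm.sign (shufflePerm hS hSc hd) = (-1) ^ ∑ y ∈ S, #{x ∈ Sᶜ | x < y} := by
  rw [← Perm.sign_symm, Perm.sign_eq_prod_prod_Iio]
  calc ∏ y, ∏ x ∈ Iio y, (if (shufflePerm hS hSc hd).symm x < (shufflePerm hS hSc hd).symm y
          then 1 else -1 : ℤˣ)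
      = ∏ y, ∏ x ∈ Iio y, (if y ∈ S ∧ x ∉ S then -1 else 1 : ℤˣ) := by
        refine prod_congr rfl fun y _ => prod_congr rfl fun x hx => ?_
        simp only [shufflePerm_symm_lt_iff hS hSc hd (mem_Iio.mp hx)]
        by_cases hy : y ∈ S <;> by_cases hx : x ∈ S <;> simp [hx, hy]
    _ = ∏ y, if y ∈ S then (-1) ^ #{x ∈ Sᶜ | x < y} else 1 := by
        refine prod_congr rfl fun y _ => ?_
        have hfilter : {x ∈ Iio y | x ∉ S} = {x ∈ Sᶜ | x < y} := by ext; simp [and_comm]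
        split_ifs with hy <;> simp [hy, prod_ite, hfilter]
    _ = (-1) ^ ∑ y ∈ S, #{x ∈ Sᶜ | x < y} := by
        rw [prod_ite_mem, univ_inter, prod_pow_eq_pow_sum]

end Shuffle

theorem Matrix.det_mul_det_toBlocks₁₁_of_mul_eq_one {R α β : Type*} [CommRing R]
    [Fintype α] [Fintype β] [DecidableEq α] [DecidableEq β] {N N' : Matrix (α ⊕ β) (α ⊕ β) R}
    (h : N * N' = 1) : N.det * N'.toBlocks₁₁.det = N.toBlocks₂₂.det := by
  have hcol : N * fromBlocks N'.toBlocks₁₁ 0 N'.toBlocks₂₁ 1 =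
      fromBlocks 1 N.toBlocks₁₂ 0 N.toBlocks₂₂ := by
    ext (i | i) (j | j)
    · simpa [mul_apply, Fintype.sum_sum_type, one_apply, toBlocks₁₁, toBlocks₂₁]
        using congrFun₂ h (.inl i) (.inl j)
    · simp [mul_apply, Fintype.sum_sum_type, one_apply, toBlocks₁₂]
    · simpa [mul_apply, Fintype.sum_sum_type, toBlocks₁₁, toBlocks₂₁]
        using congrFun₂ h (.inr i) (.inl j)
    · simp [mul_apply, Fintype.sum_sum_type, one_apply, toBlocks₂₂]
  simpa [det_fromBlocks_zero₁₂, det_fromBlocks_zero₂₁] using congrArg det hcol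

section Jacobi

variable {R : Type*} [CommRing R] {d m k : ℕ}

theorem Matrix.det_submatrix_finSumEquivOfFinset (A : Matrix (Fin d) (Fin d) R)
    {I J : Finset (Fin d)} (hI : #I = m) (hJ : #J = m) (hIc : #Iᶜ = k) (hJc : #Jᶜ = k)
    (hd : m + k = d) :
    (A.submatrix (finSumEquivOfFinset hJ hJc) (finSumEquivOfFinset hI hIc)).det =
      (-1) ^ (∑ y ∈ I, #{x ∈ Iᶜ | x < y} + ∑ y ∈ J, #{x ∈ Jᶜ | x < y}) * A.det := by
  have hsub : A.submatrix (finSumEquivOfFinset hJ hJc) (finSumEquivOfFinset hI hIc) =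
      ((A.submatrix (Fin.shufflePerm hJ hJc hd) id).submatrix id
        (Fin.shufflePerm hI hIc hd)).submatrix
        (finSumFinEquiv.trans (finCongr hd)) (finSumFinEquiv.trans (finCongr hd)) := by
    ext a b
    simp only [submatrix_apply, Equiv.trans_apply, Fin.shufflePerm_apply, id]
  rw [hsub, det_submatrix_equiv_self, det_permute', det_permute, Fin.sign_shufflePerm,
    Fin.sign_shufflePerm]
  push_cast
  ring

theorem Matrix.det_mul_det_submatrix_eq_det_submatrix_compl (hd : m + k = d)
    {A A' : Matrix (Fin d) (Fin d) R} (hAA' : A * A' = 1)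
    {I J : Finset (Fin d)} (hI : #I = m) (hJ : #J = m) (hIc : #Iᶜ = k) (hJc : #Jᶜ = k) :
    A.det * (A'.submatrix (I.orderEmbOfFin hI) (J.orderEmbOfFin hJ)).det =
      (-1) ^ (∑ i ∈ I, (i : ℕ) + ∑ j ∈ J, (j : ℕ)) *
        (A.submatrix (Jᶜ.orderEmbOfFin hJc) (Iᶜ.orderEmbOfFin hIc)).det := by
  have hblock := det_mul_det_toBlocks₁₁_of_mul_eq_one
    (N := A.submatrix (finSumEquivOfFinset hJ hJc) (finSumEquivOfFinset hI hIc))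
    (N' := A'.submatrix (finSumEquivOfFinset hI hIc) (finSumEquivOfFinset hJ hJc))
    (by rw [submatrix_mul_equiv, hAA', submatrix_one_equiv])
  rw [det_submatrix_finSumEquivOfFinset A hI hJ hIc hJc hd] at hblock
  change _ * (A'.submatrix (I.orderEmbOfFin hI) (J.orderEmbOfFin hJ)).det =
    (A.submatrix (Jᶜ.orderEmbOfFin hJc) (Iᶜ.orderEmbOfFin hIc)).det at hblock
  rw [← hblock, Fin.sum_val_eq_sum_card_compl_lt_add I, Fin.sum_val_eq_sum_card_compl_lt_add J,
    hI, hJ]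
  set a := ∑ y ∈ I, #{x ∈ Iᶜ | x < y}
  set b := ∑ y ∈ J, #{x ∈ Jᶜ | x < y}
  set T := ∑ j ∈ range m, j
  have hsq : (-1 : R) ^ (a + T + (b + T)) * (-1) ^ (a + b) = 1 := by
    rw [← pow_add]
    exact Even.neg_one_pow ⟨a + b + T, by ring⟩
  linear_combination
    (-(A.det * (A'.submatrix (I.orderEmbOfFin hI) (J.orderEmbOfFin hJ)).det)) * hsq

theorem Matrix.det_mul_det_transpose_submatrix_mul_neg_one_pow (hd : m + k = d)
    {A A' : Matrix (Fin d) (Fin d) R} (hAA' : A * A' = 1)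
    {t u : Finset (Fin d)} (ht : #t = m) (hu : #u = m) (htc : #tᶜ = k) (huc : #uᶜ = k) :
    A.det * (A'ᵀ.submatrix (t.orderEmbOfFin ht) (u.orderEmbOfFin hu)).det *
        (-1) ^ (∑ i ∈ u, ((i : ℕ) + 1)) =
      (-1) ^ (∑ i ∈ t, ((i : ℕ) + 1)) *
        (A.submatrix (tᶜ.orderEmbOfFin htc) (uᶜ.orderEmbOfFin huc)).det := by
  have hsign : (-1 : R) ^ (∑ i ∈ u, (i : ℕ) + ∑ j ∈ t, (j : ℕ)) *
      (-1) ^ ∑ i ∈ u, ((i : ℕ) + 1) = (-1) ^ ∑ i ∈ t, ((i : ℕ) + 1) := by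
    rw [Fin.sum_val_add_one, Fin.sum_val_add_one, hu, ht, ← pow_add,
      show ∀ a b n : ℕ, a + b + (a + n) = b + n + 2 * a by intros; ring, pow_add, pow_mul,
      neg_one_sq, one_pow, mul_one]
  rw [← transpose_submatrix, det_transpose,
    det_mul_det_submatrix_eq_det_submatrix_compl hd hAA' hu ht huc htc, ← hsign]
  ring

end Jacobi

/-- For a `d`-dimensional `K`-vector space `M` with basis `e` and any invertible endomorphism
`A` of `M`: `det A · ((A⁻¹)ᵗ ∘ ⋆) = ⋆ ∘ ∧^k A` on `∧^k M`, where the transpose is taken with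
respect to the basis `e` and `A`, `(A⁻¹)ᵗ` act functorially on exterior powers (in the basis
model, via minors). -/
theorem stmt13 {K M : Type*} [Field K] [AddCommGroup M] [Module K M]
    {d : ℕ} (e : Module.Basis (Fin d) K M) (A : M ≃ₗ[K] M) (k : ℕ) (hkd : k ≤ d)
    (c : {s : Finset (Fin d) // s.card = k} → K) :
    LinearMap.det (A : M →ₗ[K] M) •
        extPowMap (d - k) ((LinearMap.toMatrix e e (A.symm : M →ₗ[K] M)).transpose)
          (starMap hkd c) =
      starMap hkd (extPowMap k (LinearMap.toMatrix e e (A : M →ₗ[K] M)) c) := by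
  have hA : LinearMap.toMatrix e e (A : M →ₗ[K] M) * LinearMap.toMatrix e e (A.symm : M →ₗ[K] M)
      = 1 := by
    rw [← LinearMap.toMatrix_comp e e e, ← LinearEquiv.coe_trans, LinearEquiv.symm_trans_self]
    exact LinearMap.toMatrix_id e
  funext t
  simp only [Pi.smul_apply, smul_eq_mul, extPowMap, starMap, coe_orderIsoOfFin_apply]
  rw [← (Fin.complCardEquiv hkd).sum_comp, mul_sum, mul_sum]
  refine sum_congr rfl fun u _ => ?_
  dsimp only [Fin.complCardEquiv, Equiv.coe_fn_mk]
  rw [← LinearMap.det_toMatrix e]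
  have huc := (Fin.card_compl_eq_iff hkd u).mpr u.2
  linear_combination c ⟨u.1ᶜ, huc⟩ * det_mul_det_transpose_submatrix_mul_neg_one_pow (by omega)
    hA t.2 u.2 ((Fin.card_compl_eq_iff hkd t).mpr t.2) huc
end
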